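/- Let S be a finite set of points in ℝ^d. Then there exists a Tverberg graph for S (a graph with vertex set S whose edge-diameter balls have a common point) whose minimum degree is at least |S|/(d+1). -/

import Mathlib

open Real

/-- The closed ball with diameter segment `ab` in `ℝ^d`. -/
def ballD {d : ℕ} (a b : EuclideanSpace ℝ (Fin d)) : Set (EuclideanSpace ℝ (Fin d)) :=
  Metric.closedBall (midpoint ℝ a b) (dist a b / 2)

/-!
Let `c` be a centerpoint of `S`: every closed halfspace whose boundary passes through `c`
contains at least `|S|/(d+1)` points of `S`. It exists by Helly's theorem, since any `d+1` subsets
of `S` that each miss fewer than `|S|/(d+1)` points share a point. Join `a, b ∈ S` when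
`⟪a - c, b - c⟫ ≤ 0`, which by Thales' theorem says exactly that `c ∈ D(a, b)`. The neighbours
of `v` are then the points of `S` in the closed halfspace `{w | ⟪v - c, w - c⟫ ≤ 0}`.
-/

open Finset Module

lemma dist_midpoint_sq_eq {E : Type*} [NormedAddCommGroup E] [InnerProductSpace ℝ E]
    (a b c : E) :
    dist c (midpoint ℝ a b) ^ 2 = (dist a b / 2) ^ 2 + inner ℝ (a - c) (b - c) := by
  have hmid : midpoint ℝ a b - c = (2⁻¹ : ℝ) • ((a - c) + (b - c)) := by
    rw [midpoint_eq_smul_add, invOf_eq_inv]; module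
  have hab : a - b = (a - c) - (b - c) := by abel
  rw [dist_comm, dist_eq_norm, dist_eq_norm, hmid, hab]
  generalize a - c = x
  generalize b - c = y
  rw [norm_smul, mul_pow, div_pow, norm_add_sq_real, norm_sub_sq_real]
  norm_num
  ring

lemma mem_ballD_iff {d : ℕ} {a b c : EuclideanSpace ℝ (Fin d)} :
    c ∈ ballD a b ↔ inner ℝ (a - c) (b - c) ≤ (0 : ℝ) := by
  rw [ballD, Metric.mem_closedBall, ← sq_le_sq₀ dist_nonneg (by positivity),
    dist_midpoint_sq_eq]
  constructor <;> intro h <;> linarith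

lemma Finset.exists_mem_forall_mem_of_sum_card_sdiff_lt {α : Type*} [DecidableEq α]
    {S : Finset α} {I : Finset (Finset α)} (h : ∑ A ∈ I, #(S \ A) < #S) :
    ∃ x ∈ S, ∀ A ∈ I, x ∈ A := by
  obtain ⟨x, hxS, hx⟩ := exists_mem_notMem_of_card_lt_card (card_biUnion_le.trans_lt h)
  exact ⟨x, hxS, fun A hA => by_contra fun hxA =>
    hx (mem_biUnion.2 ⟨A, hA, mem_sdiff.2 ⟨hxS, hxA⟩⟩)⟩

section Centerpoint

variable (𝕜 : Type*) {E : Type*} [Field 𝕜] [AddCommGroup E] [Module 𝕜 E] [DecidableEq E]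

noncomputable def largeSubsets (S : Finset E) : Finset (Finset E) :=
  {A ∈ S.powerset | (finrank 𝕜 E + 1) * #(S \ A) < #S}

variable {𝕜}

lemma sum_card_sdiff_lt_of_subset_largeSubsets {S : Finset E} {I : Finset (Finset E)}
    (hI : I ⊆ largeSubsets 𝕜 S) (hne : I.Nonempty) (hcard : #I ≤ finrank 𝕜 E + 1) :
    ∑ A ∈ I, #(S \ A) < #S := by
  refine Nat.lt_of_mul_lt_mul_left (a := finrank 𝕜 E + 1) ?_
  calc (finrank 𝕜 E + 1) * ∑ A ∈ I, #(S \ A)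
      = ∑ A ∈ I, (finrank 𝕜 E + 1) * #(S \ A) := mul_sum _ _ _
    _ < ∑ _A ∈ I, #S := sum_lt_sum_of_nonempty hne fun A hA => (mem_filter.1 (hI hA)).2
    _ = #I * #S := by rw [sum_const, smul_eq_mul]
    _ ≤ (finrank 𝕜 E + 1) * #S := Nat.mul_le_mul_right _ hcard

variable [LinearOrder 𝕜] [IsStrictOrderedRing 𝕜]

variable (𝕜) in
def IsCenterpoint (S : Finset E) (c : E) : Prop :=
  ∀ f : E →ₗ[𝕜] 𝕜, #S ≤ (finrank 𝕜 E + 1) * #{w ∈ S | f w ≤ f c}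

/-- Otherwise the points of `S` strictly on one side of a hyperplane through `c` would form a
large subset whose convex hull misses `c`. -/
lemma isCenterpoint_of_forall_mem_convexHull {S : Finset E} {c : E}
    (hc : ∀ A ∈ largeSubsets 𝕜 S, c ∈ convexHull 𝕜 (A : Set E)) : IsCenterpoint 𝕜 S c := by
  intro f
  by_contra! hlt
  set A := {w ∈ S | f c < f w}
  have hsdiff : S \ A = {w ∈ S | f w ≤ f c} := by
    ext w
    simp only [A, mem_sdiff, mem_filter, not_and, not_lt]
    tauto
  have hA : A ∈ largeSubsets 𝕜 S :=
    mem_filter.2 ⟨mem_powerset.2 (filter_subset _ _), hsdiff ▸ hlt⟩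
  have hhalf : (A : Set E) ⊆ {w | f c < f w} := fun w hw => (mem_filter.1 hw).2
  exact lt_irrefl _ <|
    (convex_halfSpace_gt f.isLinear (f c)).convexHull_subset_iff.2 hhalf (hc A hA)

variable [FiniteDimensional 𝕜 E]

lemma nonempty_iInter_convexHull_largeSubsets (S : Finset E) :
    (⋂ A ∈ largeSubsets 𝕜 S, convexHull 𝕜 (A : Set E)).Nonempty := by
  refine Convex.helly_theorem' (fun A _ => convex_convexHull 𝕜 _) fun I hI hcard => ?_
  rcases I.eq_empty_or_nonempty with rfl | hne
  · simp
  obtain ⟨x, -, hx⟩ := exists_mem_forall_mem_of_sum_card_sdiff_lt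
    (sum_card_sdiff_lt_of_subset_largeSubsets hI hne hcard)
  exact ⟨x, Set.mem_iInter₂.2 fun A hA => subset_convexHull 𝕜 _ (hx A hA)⟩

variable (𝕜) in
theorem exists_isCenterpoint (S : Finset E) : ∃ c, IsCenterpoint 𝕜 S c := by
  obtain ⟨c, hc⟩ := nonempty_iInter_convexHull_largeSubsets (𝕜 := 𝕜) S
  exact ⟨c, isCenterpoint_of_forall_mem_convexHull (Set.mem_iInter₂.1 hc)⟩

end Centerpoint

lemma IsCenterpoint.card_le_card_filter_inner_nonpos {E : Type*} [NormedAddCommGroup E]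
    [InnerProductSpace ℝ E] {S : Finset E} {c : E} (hc : IsCenterpoint ℝ S c) (v : E) :
    #S ≤ (finrank ℝ E + 1) * #{w ∈ S | inner ℝ (v - c) (w - c) ≤ (0 : ℝ)} := by
  have hhalf : {w ∈ S | innerₗ E (v - c) w ≤ innerₗ E (v - c) c}
      = {w ∈ S | inner ℝ (v - c) (w - c) ≤ (0 : ℝ)} := filter_congr fun w _ => by
    rw [innerₗ_apply_apply, innerₗ_apply_apply, inner_sub_right, sub_nonpos]
  exact hhalf ▸ hc (innerₗ E (v - c))

/-- Every finite set `S` in `ℝ^d` has a Tverberg graph of minimum degree at least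
`|S|/(d+1)`. -/
theorem tverberg_graph_min_degree
    (d : ℕ) (S : Finset (EuclideanSpace ℝ (Fin d))) :
    ∃ Adj : EuclideanSpace ℝ (Fin d) → EuclideanSpace ℝ (Fin d) → Prop,
      Symmetric Adj ∧
      (∀ a b, Adj a b → a ∈ S ∧ b ∈ S) ∧
      (∃ c, ∀ a b, Adj a b → c ∈ ballD a b) ∧
      (∀ v ∈ S, (S.card : ℝ) / (d + 1) ≤
        ({w | w ∈ S ∧ Adj v w}.ncard : ℝ)) := by
  classical
  obtain ⟨c, hc⟩ := exists_isCenterpoint ℝ S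
  refine ⟨fun a b => a ∈ S ∧ b ∈ S ∧ inner ℝ (a - c) (b - c) ≤ (0 : ℝ),
    fun a b ⟨ha, hb, hab⟩ => ⟨hb, ha, real_inner_comm (a - c) (b - c) ▸ hab⟩,
    fun a b h => ⟨h.1, h.2.1⟩, ⟨c, fun a b h => mem_ballD_iff.2 h.2.2⟩, fun v hv => ?_⟩
  have hdeg : {w | w ∈ S ∧ v ∈ S ∧ w ∈ S ∧ inner ℝ (v - c) (w - c) ≤ (0 : ℝ)}
      = ({w ∈ S | inner ℝ (v - c) (w - c) ≤ (0 : ℝ)} : Finset _) := by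
    ext w
    simp [hv]
  have hcv := hc.card_le_card_filter_inner_nonpos v
  rw [finrank_euclideanSpace_fin, mul_comm] at hcv
  rw [hdeg, Set.ncard_coe_finset, div_le_iff₀ (by positivity)]
  exact_mod_cast hcv
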